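/- arXiv:1606.07478 — 3 statements merged into one kernel-verified Lean document; each statement's English description precedes it below -/
import Mathlib

section
/- Fix a simple root α_i, let Δ_P = Δ \ {α_i}, and define the linear functional F_i(v) = ⟨v, ∑_{β ∈ R^+ \ R_P^+} β⟩. Then F_i(α^∨) ≥ 0 for every positive root α. -/
/-! Write `σ` for the sum of the positive roots outside the span of `Δ \ {αᵢ}`. The coroot `α^∨`
is a positive multiple of `α`, a nonnegative combination of simple roots, so it suffices to show
`⟪a, σ⟫ ≥ 0` for every simple root `a`. For `a ≠ αᵢ` the simple reflection `s_a` permutes the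
roots summed in `σ`, so `⟪a, σ⟫ = 0`. For `a = αᵢ`, `σ` is `2ρ` minus the sum of the positive
roots of the Levi factor: `s_a` permutes the positive roots other than `a`, so `⟪a, 2ρ⟫ = ⟪a, a⟫`,
while every positive root of the Levi factor is a nonnegative combination of simple roots other
than `a` and hence pairs nonpositively with `a`. -/

noncomputable section

open scoped Classical
open scoped RealInnerProductSpace
open Finset

variable {V : Type*} [NormedAddCommGroup V] [InnerProductSpace ℝ V] [FiniteDimensional ℝ V]

/-- A (reduced, crystallographic) root system in a Euclidean space, with a fixed
choice of positive roots `Rpos` and simple roots `Δ`. -/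
structure IsRootSystem (R Rpos Δ : Finset V) : Prop where
  nonzero : ∀ α ∈ R, α ≠ (0 : V)
  reduced : ∀ α ∈ R, ∀ c : ℝ, c • α ∈ R → c = 1 ∨ c = -1
  crystallographic : ∀ α ∈ R, ∀ β ∈ R, ∃ n : ℤ, 2 * ⟪β, α⟫ / ⟪α, α⟫ = (n : ℝ)
  reflect_mem : ∀ α ∈ R, ∀ β ∈ R, β - (2 * ⟪β, α⟫ / ⟪α, α⟫) • α ∈ R
  pos_subset : Rpos ⊆ R
  pos_or_neg : ∀ α ∈ R, α ∈ Rpos ∨ -α ∈ Rpos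
  not_both : ∀ α ∈ Rpos, -α ∉ Rpos
  simple_subset : Δ ⊆ Rpos
  simple_nonneg_comb : ∀ α ∈ Rpos, ∃ c : V → ℝ, (∀ β ∈ Δ, 0 ≤ c β) ∧ α = ∑ β ∈ Δ, c β • β
  simple_indep : LinearIndependent ℝ (fun β : (Δ : Set V) => (β : V))

/-- The coroot `α^∨ = 2α/(α,α)` of a root `α`, in the Euclidean identification. -/
def coroot (α : V) : V := (2 / ⟪α, α⟫) • α

/-- The half-sum `ρ` of the positive roots. -/
def rho (Rpos : Finset V) : V := (2 : ℝ)⁻¹ • ∑ α ∈ Rpos, α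

/-- The reflection `r_α` across the hyperplane orthogonal to `α`. -/
def sref (α : V) : V ≃ₗᵢ[ℝ] V := Submodule.reflection (ℝ ∙ α)ᗮ

/-- The Weyl group: the subgroup of isometries generated by the reflections in the roots. -/
def weylGroup (R : Finset V) : Subgroup (V ≃ₗᵢ[ℝ] V) :=
  Subgroup.closure { g | ∃ α ∈ R, g = sref α }

/-- The length of a Weyl group element: the number of positive roots it sends negative. -/
def lenW (Rpos : Finset V) (w : V ≃ₗᵢ[ℝ] V) : ℕ :=
  (Rpos.filter (fun α => w α ∉ Rpos)).card

/-- Dominance: nonnegative pairing against every positive root. -/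
def isDominant (Rpos : Finset V) (lam : V) : Prop := ∀ α ∈ Rpos, 0 ≤ ⟪lam, α⟫

/-- Dominance order: `μ ≤ lam` iff `lam - μ` is a nonnegative rational combination of the
coroots of the roots in `S`. -/
def domLE (S : Finset V) (μ lam : V) : Prop :=
  ∃ c : V → ℚ, (∀ β ∈ S, 0 ≤ c β) ∧ lam - μ = ∑ β ∈ S, (c β : ℝ) • coroot β

/-- The coroot lattice `Q^∨`. -/
def corootLattice (R : Finset V) : Submodule ℤ V := Submodule.span ℤ (coroot '' (R : Set V))

section Reflection

variable {E : Type*} [NormedAddCommGroup E] [InnerProductSpace ℝ E]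

theorem sref_apply (a x : E) : sref a x = x - (2 * ⟪x, a⟫ / ⟪a, a⟫) • a := by
  rw [sref, Submodule.reflection_orthogonal_apply, Submodule.reflection_apply,
    Submodule.starProjection_singleton, real_inner_self_eq_norm_sq, real_inner_comm, neg_sub,
    RCLike.ofReal_real_eq_id, id, ← smul_assoc, nsmul_eq_mul, Nat.cast_ofNat, mul_div_assoc]

@[simp]
theorem sref_sref (a x : E) : sref a (sref a x) = x :=
  Submodule.reflection_reflection _ x

@[simp]
theorem sref_self (a : E) : sref a a = -a :=
  Submodule.reflection_orthogonalComplement_singleton_eq_neg a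

theorem inner_sum_eq_zero_of_mapsTo_sref {a : E} {T : Finset E}
    (hT : ∀ β ∈ T, sref a β ∈ T) : ⟪a, ∑ β ∈ T, β⟫ = 0 := by
  have hfix : sref a (∑ β ∈ T, β) = ∑ β ∈ T, β := by
    rw [map_sum]
    exact sum_nbij' (sref a) (sref a) hT hT (fun β _ => sref_sref a β)
      (fun β _ => sref_sref a β) (fun _ _ => rfl)
  exact Submodule.mem_orthogonal_singleton_iff_inner_right.mp
    ((Submodule.reflection_eq_self_iff _).mp hfix)

end Reflection

namespace IsRootSystem

variable {E : Type*} [NormedAddCommGroup E] [InnerProductSpace ℝ E] {R Rpos Δ : Finset E}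

theorem sref_mem (h : IsRootSystem R Rpos Δ) {a β : E} (ha : a ∈ R) (hβ : β ∈ R) :
    sref a β ∈ R := by
  rw [sref_apply]
  exact h.reflect_mem a ha β hβ

theorem coeff_nonneg_of_mem_pos (h : IsRootSystem R Rpos Δ) {γ : E} (hγ : γ ∈ Rpos)
    {S : Finset E} (hS : S ⊆ Δ) {f : E → ℝ} (hf : γ = ∑ k ∈ S, f k • k) {k : E} (hk : k ∈ S) :
    0 ≤ f k := by
  obtain ⟨c, hc, hcγ⟩ := h.simple_nonneg_comb γ hγ
  have hfΔ : γ = ∑ k ∈ Δ, (if k ∈ S then f k else 0) • k := by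
    simp only [ite_smul, zero_smul, sum_ite_mem, inter_eq_right.mpr hS, hf]
  have hindep : LinearIndepOn ℝ id (Δ : Set E) := h.simple_indep
  have hck := linearIndepOn_finset_iffₛ.mp hindep c _ (hcγ.symm.trans hfΔ) k (hS hk)
  simpa [hk, hck] using hc k (hS hk)

theorem coeff_nonneg_or_nonpos (h : IsRootSystem R Rpos Δ) {γ : E} (hγ : γ ∈ R)
    {S : Finset E} (hS : S ⊆ Δ) {f : E → ℝ} (hf : γ = ∑ k ∈ S, f k • k) :
    (∀ k ∈ S, 0 ≤ f k) ∨ (∀ k ∈ S, f k ≤ 0) := by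
  rcases h.pos_or_neg γ hγ with hpos | hneg
  · exact Or.inl fun k hk => h.coeff_nonneg_of_mem_pos hpos hS hf hk
  · refine Or.inr fun k hk => neg_nonneg.mp (h.coeff_nonneg_of_mem_pos hneg hS (f := -f) ?_ hk)
    simp only [hf, Pi.neg_apply, neg_smul, sum_neg_distrib]

theorem inner_simple_nonpos (h : IsRootSystem R Rpos Δ) {a b : E} (ha : a ∈ Δ) (hb : b ∈ Δ)
    (hab : a ≠ b) : ⟪a, b⟫ ≤ 0 := by
  by_contra! hpos
  have haR := h.pos_subset (h.simple_subset ha)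
  have hc : 0 < 2 * ⟪b, a⟫ / ⟪a, a⟫ := by
    rw [real_inner_comm] at hpos
    have := real_inner_self_pos.mpr (h.nonzero a haR)
    positivity
  have hγ : sref a b = ∑ k ∈ {a, b}, (if k = a then -(2 * ⟪b, a⟫ / ⟪a, a⟫) else 1) • k := by
    rw [sref_apply, sum_pair hab, if_pos rfl, if_neg hab.symm, one_smul, neg_smul,
      sub_eq_neg_add]
  rcases h.coeff_nonneg_or_nonpos (h.sref_mem haR (h.pos_subset (h.simple_subset hb)))
    (insert_subset ha (singleton_subset_iff.mpr hb)) hγ with hnn | hnp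
  · have := hnn a (mem_insert_self a {b})
    rw [if_pos rfl] at this
    linarith
  · have := hnp b (mem_insert_of_mem (mem_singleton_self b))
    rw [if_neg hab.symm] at this
    linarith

theorem sref_mem_pos (h : IsRootSystem R Rpos Δ) {a β : E} (ha : a ∈ Δ) (hβ : β ∈ Rpos)
    (hne : β ≠ a) : sref a β ∈ Rpos := by
  have haR := h.pos_subset (h.simple_subset ha)
  refine (h.pos_or_neg _ (h.sref_mem haR (h.pos_subset hβ))).resolve_right fun hneg => ?_
  obtain ⟨d, hd, hdβ⟩ := h.simple_nonneg_comb β hβ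
  -- `-s_a β = c a - β` has nonnegative coefficients, which forces `β` onto the line through `a`.
  have hd_zero : ∀ k ∈ Δ, k ≠ a → d k = 0 := by
    intro k hk hka
    have hneg_coeff := h.coeff_nonneg_of_mem_pos hneg subset_rfl
      (f := fun k => (if k = a then 2 * ⟪β, a⟫ / ⟪a, a⟫ else 0) - d k)
      (by simp only [sref_apply, sub_smul, ite_smul, zero_smul, sum_sub_distrib, sum_ite_eq', ha,
        if_true, ← hdβ, neg_sub]) hk
    simp only [if_neg hka, zero_sub, neg_nonneg] at hneg_coeff
    linarith [hd k hk]
  have hβa : β = d a • a := by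
    rw [hdβ]
    exact sum_eq_single_of_mem a ha fun k hk hka => by rw [hd_zero k hk hka, zero_smul]
  rcases h.reduced a haR (d a) (hβa ▸ h.pos_subset hβ) with h1 | h1
  · exact hne (by rw [hβa, h1, one_smul])
  · exact h.not_both a (h.simple_subset ha) (by rwa [hβa, h1, neg_one_smul] at hβ)

theorem inner_sum_pos_eq_inner_self (h : IsRootSystem R Rpos Δ) {a : E} (ha : a ∈ Δ) :
    ⟪a, ∑ β ∈ Rpos, β⟫ = ⟪a, a⟫ := by
  have hstable : ∀ β ∈ Rpos.erase a, sref a β ∈ Rpos.erase a := by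
    intro β hβ
    obtain ⟨hne, hβ⟩ := mem_erase.mp hβ
    refine mem_erase.mpr ⟨fun heq => ?_, h.sref_mem_pos ha hβ hne⟩
    have hβa : β = -a := by rw [← sref_sref a β, heq, sref_self]
    exact h.not_both a (h.simple_subset ha) (hβa ▸ hβ)
  rw [← add_sum_erase _ _ (h.simple_subset ha), inner_add_right,
    inner_sum_eq_zero_of_mapsTo_sref hstable, add_zero]

theorem inner_sum_filter_notMem_eq_zero (h : IsRootSystem R Rpos Δ) {P : Submodule ℝ E}
    {a : E} (ha : a ∈ Δ) (haP : a ∈ P) : ⟪a, ∑ β ∈ Rpos.filter (· ∉ P), β⟫ = 0 := by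
  refine inner_sum_eq_zero_of_mapsTo_sref fun β hβ => ?_
  obtain ⟨hβ, hβP⟩ := mem_filter.mp hβ
  have hmemP : sref a β ∈ P ↔ β ∈ P := by
    rw [sref_apply]
    exact P.sub_mem_iff_left (P.smul_mem _ haP)
  exact mem_filter.mpr ⟨h.sref_mem_pos ha hβ (by rintro rfl; exact hβP haP), hmemP.not.mpr hβP⟩

theorem inner_nonpos_of_mem_span (h : IsRootSystem R Rpos Δ) {S : Finset E} (hS : S ⊆ Δ)
    {a β : E} (ha : a ∈ Δ) (haS : a ∉ S) (hβ : β ∈ Rpos)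
    (hβS : β ∈ Submodule.span ℝ (S : Set E)) : ⟪a, β⟫ ≤ 0 := by
  obtain ⟨f, -, hf⟩ := Submodule.mem_span_finset.mp hβS
  rw [← hf, inner_sum]
  refine sum_nonpos fun k hk => ?_
  rw [real_inner_smul_right]
  exact mul_nonpos_of_nonneg_of_nonpos (h.coeff_nonneg_of_mem_pos hβ hS hf.symm hk)
    (h.inner_simple_nonpos ha (hS hk) (ne_of_mem_of_not_mem hk haS).symm)

theorem inner_sum_filter_notMem_span_erase_nonneg (h : IsRootSystem R Rpos Δ) {αi a : E}
    (ha : a ∈ Δ) :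
    0 ≤ ⟪a, ∑ β ∈ Rpos.filter (· ∉ Submodule.span ℝ ((Δ.erase αi : Finset E) : Set E)), β⟫ := by
  set P := Submodule.span ℝ ((Δ.erase αi : Finset E) : Set E)
  by_cases hai : a = αi
  · subst hai
    have hLevi : ⟪a, ∑ β ∈ Rpos.filter (· ∈ P), β⟫ ≤ 0 := by
      rw [inner_sum]
      exact sum_nonpos fun β hβ => h.inner_nonpos_of_mem_span (erase_subset a Δ) ha
        (notMem_erase a Δ) (mem_filter.mp hβ).1 (mem_filter.mp hβ).2
    have hρ := h.inner_sum_pos_eq_inner_self ha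
    rw [← sum_filter_add_sum_filter_not Rpos (· ∈ P), inner_add_right] at hρ
    linarith [real_inner_self_nonneg (x := a)]
  · exact (h.inner_sum_filter_notMem_eq_zero ha
      (Submodule.subset_span (mem_erase.mpr ⟨hai, ha⟩))).ge

end IsRootSystem

theorem stmt_3_general (R Rpos Δ : Finset V) (h : IsRootSystem R Rpos Δ)
    (αi : V) (α : V) (hα : α ∈ Rpos) :
    0 ≤ ⟪coroot α,
      ∑ β ∈ Rpos.filter
        (fun β => β ∉ Submodule.span ℝ (((Δ.erase αi) : Finset V) : Set V)), β⟫ := by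
  obtain ⟨c, hc, hcα⟩ := h.simple_nonneg_comb α hα
  have hα_nonneg : 0 ≤ ⟪α, ∑ β ∈ Rpos.filter
      (fun β => β ∉ Submodule.span ℝ (((Δ.erase αi) : Finset V) : Set V)), β⟫ := by
    rw [hcα, sum_inner]
    exact sum_nonneg fun k hk => by
      rw [real_inner_smul_left]
      exact mul_nonneg (hc k hk) (h.inner_sum_filter_notMem_span_erase_nonneg hk)
  rw [coroot, real_inner_smul_left]
  exact mul_nonneg (div_nonneg zero_le_two real_inner_self_nonneg) hα_nonneg

theorem stmt_3 (R Rpos Δ : Finset V) (h : IsRootSystem R Rpos Δ)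
    (αi : V) (hi : αi ∈ Δ) (α : V) (hα : α ∈ Rpos) :
    0 ≤ ⟪coroot α,
      ∑ β ∈ Rpos.filter
        (fun β => β ∉ Submodule.span ℝ (((Δ.erase αi) : Finset V) : Set V)), β⟫ :=
  stmt_3_general R Rpos Δ h αi α hα
end
end

section
/- Let λ be a dominant coroot, α_i a simple root, and set ν_i = λ − (⟨λ, α_i⟩/2) α_i^∨, the orthogonal projection of λ onto the hyperplane H_{α_i}. Suppose ν is any dominant element with ν ≤ λ in dominance order and ⟨ν, α_i⟩ = 0. Then ν ≤ ν_i in dominance order. -/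
noncomputable section

open scoped Classical
open scoped RealInnerProductSpace
open Finset

variable {V : Type*} [NormedAddCommGroup V] [InnerProductSpace ℝ V] [FiniteDimensional ℝ V]

/-! Write `λ - ν = ∑ c_β β^∨` with `c_β ≥ 0`. As `⟨ν, α_i⟩ = 0`, the element `ν_i - ν` is the
orthogonal projection `x ↦ x - (⟨x, α_i⟩ / 2) α_i^∨` of `λ - ν` onto `H_{α_i}`, namely
`∑_{β ≠ α_i} c_β (β^∨ - (⟨β^∨, α_i⟩ / 2) α_i^∨)`. Each projected coroot is a nonnegative rational
combination of simple coroots, since the Cartan integers `⟨β^∨, α_i⟩` are `≤ 0` for `β ≠ α_i`;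
that in turn holds because otherwise the reflection of `α_i` in `β` would be a root with simple-root
coefficients of both signs. -/

omit [FiniteDimensional ℝ V] in
theorem inner_coroot_self {α : V} (hα : α ≠ 0) : ⟪coroot α, α⟫ = 2 := by
  rw [coroot, real_inner_smul_left, div_mul_cancel₀ _ (inner_self_ne_zero.mpr hα)]

def corootCone (S : Finset V) : AddSubmonoid V where
  carrier := {x | domLE S 0 x}
  zero_mem' := ⟨0, fun _ _ => le_rfl, by simp⟩
  add_mem' := by
    rintro x y ⟨c, hc, hx⟩ ⟨d, hd, hy⟩
    refine ⟨c + d, fun β hβ => add_nonneg (hc β hβ) (hd β hβ), ?_⟩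
    rw [sub_zero] at hx hy ⊢
    simp only [hx, hy, Pi.add_apply, Rat.cast_add, add_smul, sum_add_distrib]

namespace corootCone

variable {S : Finset V}

omit [FiniteDimensional ℝ V]

theorem domLE_iff_sub_mem {μ lam : V} : domLE S μ lam ↔ lam - μ ∈ corootCone S := by
  show domLE S μ lam ↔ domLE S 0 (lam - μ)
  simp only [domLE, sub_zero]

theorem coroot_mem {β : V} (hβ : β ∈ S) : coroot β ∈ corootCone S := by
  refine ⟨fun γ => if γ = β then 1 else 0, fun γ _ => ?_, ?_⟩
  · dsimp only
    split_ifs <;> norm_num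
  · simp [apply_ite (Rat.cast : ℚ → ℝ), ite_smul, hβ]

theorem ratCast_smul_mem {q : ℚ} (hq : 0 ≤ q) {x : V} (hx : x ∈ corootCone S) :
    (q : ℝ) • x ∈ corootCone S := by
  obtain ⟨c, hc, hx⟩ := hx
  refine ⟨q • c, fun β hβ => mul_nonneg hq (hc β hβ), ?_⟩
  rw [sub_zero] at hx ⊢
  simp only [hx, smul_sum, smul_smul, Pi.smul_apply, smul_eq_mul, Rat.cast_mul]

theorem sub_smul_coroot_mem {α : V} (hα : α ∈ S) (hαα : ⟪coroot α, α⟫ = 2)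
    (hcartan : ∀ β ∈ S, ∃ n : ℤ, ⟪coroot β, α⟫ = n)
    (hnonpos : ∀ β ∈ S, β ≠ α → ⟪coroot β, α⟫ ≤ 0) {x : V} (hx : x ∈ corootCone S) :
    x - (⟪x, α⟫ / 2) • coroot α ∈ corootCone S := by
  obtain ⟨c, hc, hx⟩ := hx
  rw [sub_zero] at hx
  have hproj : x - (⟪x, α⟫ / 2) • coroot α =
      ∑ β ∈ S, (c β : ℝ) • (coroot β - (⟪coroot β, α⟫ / 2) • coroot α) := by
    simp only [hx, sum_inner, real_inner_smul_left, sum_div, sum_smul, smul_sub,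
      ← sum_sub_distrib, smul_smul, mul_div_assoc]
  rw [hproj]
  refine sum_mem fun β hβ => ratCast_smul_mem (hc β hβ) ?_
  by_cases hβα : β = α
  · simp [hβα, hαα, zero_mem]
  obtain ⟨n, hn⟩ := hcartan β hβ
  have hn0 : (n : ℚ) ≤ 0 := by exact_mod_cast hn ▸ hnonpos β hβ hβα
  have hcoeff : 0 ≤ -(n : ℚ) / 2 := by linarith
  convert add_mem (coroot_mem hβ) (ratCast_smul_mem hcoeff (coroot_mem hα)) using 1
  rw [hn]
  push_cast
  rw [sub_eq_add_neg, ← neg_smul, neg_div]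

end corootCone

namespace IsRootSystem

variable {R Rpos Δ : Finset V} (h : IsRootSystem R Rpos Δ)
include h

omit [FiniteDimensional ℝ V]

theorem mem_of_mem_simple {α : V} (hα : α ∈ Δ) : α ∈ R :=
  h.pos_subset (h.simple_subset hα)

theorem exists_int_inner_coroot {α β : V} (hα : α ∈ R) (hβ : β ∈ R) :
    ∃ n : ℤ, ⟪coroot β, α⟫ = n := by
  obtain ⟨n, hn⟩ := h.crystallographic β hβ α hα
  exact ⟨n, by rw [← hn, coroot, real_inner_smul_left, real_inner_comm α β]; ring⟩

theorem coeff_nonneg_of_mem_pos_s10 {x : V} (hx : x ∈ Rpos) {f : V → ℝ}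
    (hf : x = ∑ δ ∈ Δ, f δ • δ) : ∀ δ ∈ Δ, 0 ≤ f δ := by
  obtain ⟨e, he, rfl⟩ := h.simple_nonneg_comb x hx
  have hfe := (linearIndepOn_finset_iff (v := (id : V → V)) (s := Δ)).mp h.simple_indep
    (fun δ => f δ - e δ) (by simp only [sub_smul, sum_sub_distrib, id, ← hf, sub_self])
  intro δ hδ
  linarith [hfe δ hδ, he δ hδ]

theorem nonneg_of_smul_add_smul_mem_pos {α β : V} (hα : α ∈ Δ) (hβ : β ∈ Δ) (hne : α ≠ β)
    {a b : ℝ} (hx : a • α + b • β ∈ Rpos) : 0 ≤ a ∧ 0 ≤ b := by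
  have hf := h.coeff_nonneg_of_mem_pos_s10 hx (f := Pi.single α a + Pi.single β b)
    (by simp [add_smul, sum_add_distrib, Pi.single_apply, ite_smul, hα, hβ])
  exact ⟨by simpa [hne] using hf α hα, by simpa [hne.symm] using hf β hβ⟩

theorem inner_nonpos_of_mem_simple {α β : V} (hα : α ∈ Δ) (hβ : β ∈ Δ) (hne : α ≠ β) :
    ⟪α, β⟫ ≤ 0 := by
  by_contra! hpos
  have hβR := h.mem_of_mem_simple hβ
  have hrefl := h.reflect_mem β hβR α (h.mem_of_mem_simple hα)
  set c := 2 * ⟪α, β⟫ / ⟪β, β⟫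
  have hc : 0 < c := div_pos (by linarith) (real_inner_self_pos.mpr (h.nonzero β hβR))
  rcases h.pos_or_neg _ hrefl with hpos | hneg
  · have := h.nonneg_of_smul_add_smul_mem_pos hα hβ hne (a := 1) (b := -c)
      (by rwa [one_smul, neg_smul, ← sub_eq_add_neg])
    linarith [this.2]
  · have := h.nonneg_of_smul_add_smul_mem_pos hα hβ hne (a := -1) (b := c)
      (by rwa [neg_one_smul, neg_add_eq_sub, ← neg_sub])
    linarith [this.1]

theorem inner_coroot_nonpos_of_mem_simple {α β : V} (hα : α ∈ Δ) (hβ : β ∈ Δ) (hne : β ≠ α) :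
    ⟪coroot β, α⟫ ≤ 0 := by
  rw [coroot, real_inner_smul_left]
  exact mul_nonpos_of_nonneg_of_nonpos (div_nonneg zero_le_two real_inner_self_nonneg)
    (h.inner_nonpos_of_mem_simple hβ hα hne)

end IsRootSystem

theorem stmt_10_general (R Rpos Δ : Finset V) (h : IsRootSystem R Rpos Δ)
    (lam : V)
    (αi : V) (hi : αi ∈ Δ)
    (ν : V) (hle : domLE Δ ν lam) (hperp : ⟪ν, αi⟫ = 0) :
    domLE Δ ν (lam - (⟪lam, αi⟫ / 2) • coroot αi) := by
  have hiR := h.mem_of_mem_simple hi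
  rw [corootCone.domLE_iff_sub_mem] at hle ⊢
  have hproj := corootCone.sub_smul_coroot_mem hi (inner_coroot_self (h.nonzero αi hiR))
    (fun β hβ => h.exists_int_inner_coroot hiR (h.mem_of_mem_simple hβ))
    (fun β hβ => h.inner_coroot_nonpos_of_mem_simple hi hβ) hle
  rwa [inner_sub_left, hperp, sub_zero, sub_right_comm] at hproj

theorem stmt_10 (R Rpos Δ : Finset V) (h : IsRootSystem R Rpos Δ)
    (lam : V) (hlat : lam ∈ corootLattice R) (hdom : isDominant Rpos lam)
    (αi : V) (hi : αi ∈ Δ)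
    (ν : V) (hν : isDominant Rpos ν) (hle : domLE Δ ν lam) (hperp : ⟪ν, αi⟫ = 0) :
    domLE Δ ν (lam - (⟪lam, αi⟫ / 2) • coroot αi) :=
  stmt_10_general R Rpos Δ h lam αi hi ν hle hperp
end
end

section
/- Let x = t^{λ} w in the affine Weyl group with λ dominant and w ≠ 1 of order m. Then there exists a simple reflection s_i such that λ ≥ ν(t^{λ}s_i) ≥ ν(x) in dominance order, where ν(t^{λ}s_i) = λ − (⟨λ, α_i⟩/2)α_i^∨ and ν(x) is the dominant representative of (1/m)∑_{k=1}^m w^k(λ). -/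
noncomputable section

open scoped Classical
open scoped RealInnerProductSpace
open Finset

variable {V : Type*} [NormedAddCommGroup V] [InnerProductSpace ℝ V] [FiniteDimensional ℝ V]

/-!
Write `lam - ν` as the average of the vectors `lam - g lam` over the Weyl group elements
`g = u w^k`. For dominant `lam` each `lam - g lam` is a nonnegative combination of positive roots
(induction along a reduced word for `g`), so `lam - ν = ∑ c_β β^∨` with `c_β ≥ 0`; the `c_β` are
rational because the Cartan matrix is an invertible integer matrix and `lam` pairs integrally with
the roots. The vector `ν` is fixed by `u w u⁻¹ ≠ 1`, and a dominant vector positive on all simple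
roots is fixed by no nontrivial element of the Weyl group, so `⟪ν, α⟫ = 0` for a simple root `α`.
Pairing `lam - ν` with `α` and using `⟪β^∨, α⟫ ≤ 0` for `β ≠ α` gives `⟪lam, α⟫ ≤ 2 c_α`, which is
the second inequality; the first one is `⟪lam, α⟫ ≥ 0`.
-/

lemma Finset.sum_range_rotate {M : Type*} [AddCancelCommMonoid M] {f : ℕ → M} {n : ℕ}
    (hf : f n = f 0) : ∑ k ∈ range n, f (k + 1) = ∑ k ∈ range n, f k := by
  have h := (sum_range_succ f n).symm.trans (sum_range_succ' f n)
  rw [hf] at h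
  exact (add_right_cancel h).symm

open Matrix in
lemma Matrix.exists_ratCast_eq_of_vecMul {ι : Type*} [Fintype ι] [DecidableEq ι]
    (A : Matrix ι ι ℚ) (hA : IsUnit (A.map ((↑) : ℚ → ℝ))) {c : ι → ℝ} {q : ι → ℚ}
    (hc : c ᵥ* A.map (↑) = (↑) ∘ q) : ∃ p : ι → ℚ, c = (↑) ∘ p := by
  have hAq : IsUnit A := by
    rw [Matrix.isUnit_iff_isUnit_det] at hA ⊢
    rwa [← isUnit_map_iff (Rat.castHom ℝ), RingHom.map_det]
  refine ⟨q ᵥ* A⁻¹, Matrix.vecMul_injective_iff_isUnit.2 hA ?_⟩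
  funext k
  simp only [hc, Function.comp_apply]
  have := (Rat.castHom ℝ).map_vecMul A (q ᵥ* A⁻¹) k
  rwa [Matrix.vecMul_vecMul, Matrix.nonsing_inv_mul _ ((Matrix.isUnit_iff_isUnit_det A).1 hAq),
    Matrix.vecMul_one] at this

section

omit [FiniteDimensional ℝ V]

variable {R Rpos Δ : Finset V} {α β γ v lam ν : V} {g : V ≃ₗᵢ[ℝ] V}

lemma sref_apply_s12 (α v : V) : sref α v = v - (2 * ⟪v, α⟫ / ⟪α, α⟫) • α := by
  rcases eq_or_ne α 0 with rfl | hα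
  · simpa [sref] using (Submodule.reflection_eq_self_iff (K := ⊤) v).2 Submodule.mem_top
  · rw [sref, Submodule.reflection_orthogonal_apply, Submodule.reflection_singleton_apply]
    simp only [RCLike.ofReal_real_eq_id, id, ← real_inner_self_eq_norm_sq, real_inner_comm α v]
    module

lemma sref_apply_self (α : V) : sref α α = -α := by
  rcases eq_or_ne α 0 with rfl | hα
  · simp
  · rw [sref_apply_s12, mul_div_assoc, div_self (real_inner_self_pos.2 hα).ne']
    module

lemma sref_inv (α : V) : (sref α)⁻¹ = sref α :=
  Submodule.reflection_symm

lemma sref_mul_self (α : V) : sref α * sref α = 1 := by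
  nth_rw 1 [← sref_inv α]
  exact inv_mul_cancel _

lemma sref_neg (α : V) : sref (-α) = sref α := by
  ext v
  simp only [sref_apply_s12, inner_neg_left, inner_neg_right, neg_neg]
  module

lemma sref_conj (g : V ≃ₗᵢ[ℝ] V) (α : V) : sref (g α) = g * sref α * g⁻¹ := by
  ext v
  simp only [LinearIsometryEquiv.coe_mul, LinearIsometryEquiv.coe_inv, Function.comp_apply,
    sref_apply_s12, map_sub, map_smul, LinearIsometryEquiv.apply_symm_apply,
    LinearIsometryEquiv.inner_map_eq_flip, LinearIsometryEquiv.symm_apply_apply,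
    LinearIsometryEquiv.symm_symm]

lemma apply_sum_range_orderOf (g : V ≃ₗᵢ[ℝ] V) (x : V) :
    g (∑ k ∈ range (orderOf g), (g ^ (k + 1)) x) = ∑ k ∈ range (orderOf g), (g ^ (k + 1)) x := by
  rw [map_sum]
  convert sum_range_rotate (f := fun k => (g ^ (k + 1)) x) ?_ using 2 with k
  · rw [pow_succ' g (k + 1)]
    rfl
  · rw [pow_succ, pow_orderOf_eq_one, one_mul, zero_add, pow_one]

variable (Δ) in
def cartanMatrix : Matrix Δ Δ ℝ := Matrix.of fun i j => ⟪coroot (i : V), (j : V)⟫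

open Matrix in
lemma inner_sum_smul_coroot (c : Δ → ℝ) (k : Δ) :
    ⟪∑ i, c i • coroot (i : V), (k : V)⟫ = (c ᵥ* cartanMatrix Δ) k := by
  simp [vecMul, dotProduct, cartanMatrix, sum_inner, real_inner_smul_left]

open Matrix in
lemma isUnit_cartanMatrix (hΔ : LinearIndependent ℝ (fun β : (Δ : Set V) => (β : V))) :
    IsUnit (cartanMatrix Δ) := by
  rw [← Matrix.vecMul_injective_iff_isUnit]
  intro c d hcd
  set x := ∑ i : Δ, (c i - d i) • coroot (i : V)
  have horth : ∀ k : Δ, ⟪x, (k : V)⟫ = 0 := fun k => by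
    simp only [x, sub_smul, sum_sub_distrib, inner_sub_left, inner_sum_smul_coroot]
    exact sub_eq_zero.2 (congrFun hcd k)
  have hx : x = ∑ i : Δ, ((c i - d i) * (2 / ⟪(i : V), (i : V)⟫)) • (i : V) := by
    simp only [x, coroot, smul_smul]
  have hx0 : x = 0 := by
    rw [← inner_self_eq_zero (𝕜 := ℝ)]
    nth_rw 1 [hx]
    simp only [sum_inner, real_inner_smul_left]
    exact sum_eq_zero fun i _ => by rw [real_inner_comm x, horth, mul_zero]
  funext i
  have := Fintype.linearIndependent_iff.1 hΔ _ (hx ▸ hx0) i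
  simpa [hΔ.ne_zero i, sub_eq_zero] using this

open Matrix in
lemma exists_forall_inner_eq_one (hΔ : LinearIndependent ℝ (fun β : (Δ : Set V) => (β : V))) :
    ∃ v : V, ∀ β ∈ Δ, ⟪v, β⟫ = 1 := by
  obtain ⟨c, hc⟩ := Matrix.vecMul_surjective_iff_isUnit.2 (isUnit_cartanMatrix hΔ) 1
  exact ⟨∑ i, c i • coroot (i : V), fun β hβ => by
    simpa [hc] using inner_sum_smul_coroot c ⟨β, hβ⟩⟩

def srefProd (L : List V) : V ≃ₗᵢ[ℝ] V := (L.map sref).prod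

@[simp] lemma srefProd_nil : srefProd ([] : List V) = 1 := rfl

@[simp] lemma srefProd_cons (β : V) (L : List V) : srefProd (β :: L) = sref β * srefProd L :=
  List.prod_cons

@[simp] lemma srefProd_append (L L' : List V) : srefProd (L ++ L') = srefProd L * srefProd L' := by
  simp [srefProd]

/-- For words in simple reflections this is equivalent to being reduced. -/
def IsReducedWord (Rpos : Finset V) (L : List V) : Prop :=
  ∀ I δ J, L = I ++ δ :: J → srefProd I δ ∈ Rpos

lemma IsReducedWord.of_append {Rpos : Finset V} {L L' : List V}
    (hL : IsReducedWord Rpos (L ++ L')) : IsReducedWord Rpos L :=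
  fun I δ J hI => hL I δ (J ++ L') (by simp [hI])

lemma domLE_sub_smul_coroot (hα : α ∈ Δ) {r : ℚ} (hr : 0 ≤ r) :
    domLE Δ (lam - (r : ℝ) • coroot α) lam :=
  ⟨fun β => if β = α then r else 0, fun β _ => by dsimp only; split_ifs <;> simp [hr],
    by simp [apply_ite (Rat.cast : ℚ → ℝ), ite_smul, hα]⟩

namespace IsRootSystem

lemma mem_of_mem_simple_s12 (h : IsRootSystem R Rpos Δ) (hβ : β ∈ Δ) : β ∈ R :=
  h.pos_subset (h.simple_subset hβ)

lemma sref_apply_mem (h : IsRootSystem R Rpos Δ) (hα : α ∈ R) (hβ : β ∈ R) : sref α β ∈ R := by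
  rw [sref_apply_s12]
  exact h.reflect_mem α hα β hβ

lemma coeff_eq_of_sum_eq (h : IsRootSystem R Rpos Δ) {c d : V → ℝ}
    (hcd : ∑ μ ∈ Δ, c μ • μ = ∑ μ ∈ Δ, d μ • μ) (hβ : β ∈ Δ) : c β = d β := by
  have := (linearIndepOn_finset_iff (v := id)).1 h.simple_indep (c - d)
    (by simp [sub_smul, sum_sub_distrib, hcd]) β hβ
  exact sub_eq_zero.1 this

lemma sref_simple_apply_mem_pos (h : IsRootSystem R Rpos Δ) (hβ : β ∈ Δ) (hγ : γ ∈ Rpos)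
    (hne : γ ≠ β) : sref β γ ∈ Rpos := by
  have hmem := h.sref_apply_mem (h.mem_of_mem_simple_s12 hβ) (h.pos_subset hγ)
  refine (h.pos_or_neg _ hmem).resolve_right fun hneg => ?_
  obtain ⟨c, hc0, hc⟩ := h.simple_nonneg_comb γ hγ
  obtain ⟨d, hd0, hd⟩ := h.simple_nonneg_comb _ hneg
  -- `γ - sref β γ` is a multiple of `β`, so only `β` can occur in `γ`
  have hsum : ∑ μ ∈ Δ, (c μ + d μ) • μ =
      ∑ μ ∈ Δ, (if μ = β then 2 * ⟪γ, β⟫ / ⟪β, β⟫ else 0) • μ := by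
    simp only [add_smul, sum_add_distrib, ite_smul, zero_smul, sum_ite_eq', if_pos hβ, ← hc, ← hd,
      sref_apply_s12]
    abel
  have hγβ : γ = c β • β := by
    refine hc.trans (sum_eq_single_of_mem β hβ fun μ hμ hμβ => ?_)
    have := h.coeff_eq_of_sum_eq hsum hμ
    rw [if_neg hμβ] at this
    rw [show c μ = 0 by linarith [hc0 μ hμ, hd0 μ hμ], zero_smul]
  rcases h.reduced β (h.mem_of_mem_simple_s12 hβ) (c β) (hγβ ▸ h.pos_subset hγ) with h1 | h1
  · exact hne (by rw [hγβ, h1, one_smul])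
  · exact h.not_both β (h.simple_subset hβ) (by rwa [hγβ, h1, neg_one_smul] at hγ)

lemma inner_simple_nonpos_s12 (h : IsRootSystem R Rpos Δ) (hβ : β ∈ Δ) (hγ : γ ∈ Δ) (hne : γ ≠ β) :
    ⟪γ, β⟫ ≤ 0 := by
  obtain ⟨c, hc0, hc⟩ :=
    h.simple_nonneg_comb _ (h.sref_simple_apply_mem_pos hβ (h.simple_subset hγ) hne)
  -- compare the coefficients of `β` in `sref β γ = γ - t β`
  have hsum : ∑ μ ∈ Δ, (c μ + if μ = β then 2 * ⟪γ, β⟫ / ⟪β, β⟫ else 0) • μ =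
      ∑ μ ∈ Δ, (if μ = γ then (1 : ℝ) else 0) • μ := by
    simp only [add_smul, sum_add_distrib, ite_smul, zero_smul, one_smul, sum_ite_eq', if_pos hβ,
      if_pos hγ, ← hc, sref_apply_s12]
    abel
  have := h.coeff_eq_of_sum_eq hsum hβ
  rw [if_pos rfl, if_neg hne.symm] at this
  have hββ := real_inner_self_pos.2 (h.nonzero β (h.mem_of_mem_simple_s12 hβ))
  by_contra! hpos
  have : 0 < 2 * ⟪γ, β⟫ / ⟪β, β⟫ := by positivity
  linarith [hc0 β hβ]

lemma inner_pos_of_forall_simple (h : IsRootSystem R Rpos Δ) (hv : ∀ β ∈ Δ, 0 < ⟪v, β⟫)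
    (hγ : γ ∈ Rpos) : 0 < ⟪v, γ⟫ := by
  obtain ⟨c, hc0, hc⟩ := h.simple_nonneg_comb γ hγ
  obtain ⟨β, hβ, hcβ⟩ : ∃ β ∈ Δ, 0 < c β := by
    by_contra! hc'
    refine h.nonzero γ (h.pos_subset hγ) (hc.trans (sum_eq_zero fun β hβ => ?_))
    rw [le_antisymm (hc' β hβ) (hc0 β hβ), zero_smul]
  rw [hc, inner_sum]
  refine sum_pos' (fun μ hμ => ?_) ⟨β, hβ, ?_⟩ <;> rw [real_inner_smul_right]
  · exact mul_nonneg (hc0 μ hμ) (hv μ hμ).le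
  · exact mul_pos hcβ (hv β hβ)

lemma exists_simple_inner_pos (h : IsRootSystem R Rpos Δ) (hγ : γ ∈ Rpos) :
    ∃ β ∈ Δ, 0 < ⟪γ, β⟫ := by
  obtain ⟨c, hc0, hc⟩ := h.simple_nonneg_comb γ hγ
  by_contra! hle
  refine (real_inner_self_pos.2 (h.nonzero γ (h.pos_subset hγ))).not_ge ?_
  nth_rw 2 [hc]
  rw [inner_sum]
  exact sum_nonpos fun β hβ => by
    rw [real_inner_smul_right]; exact mul_nonpos_of_nonneg_of_nonpos (hc0 β hβ) (hle β hβ)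

lemma weylGroup_apply_mem (h : IsRootSystem R Rpos Δ) (hg : g ∈ weylGroup R) (hα : α ∈ R) :
    g α ∈ R := by
  induction hg using Subgroup.closure_induction'' generalizing α with
  | mem _ hx =>
    obtain ⟨β, hβ, rfl⟩ := hx
    exact h.sref_apply_mem hβ hα
  | inv_mem _ hx =>
    obtain ⟨β, hβ, rfl⟩ := hx
    rw [sref_inv]
    exact h.sref_apply_mem hβ hα
  | one => exact hα
  | mul _ _ _ _ ihx ihy => exact ihx (ihy hα)

lemma sref_mem_closure_simple (h : IsRootSystem R Rpos Δ) (hα : α ∈ Rpos) :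
    sref α ∈ Subgroup.closure {g | ∃ β ∈ Δ, g = sref β} := by
  set S := Subgroup.closure {g | ∃ β ∈ Δ, g = sref β}
  obtain ⟨v, hv⟩ := exists_forall_inner_eq_one h.simple_indep
  -- a counterexample of minimal height `⟪v, α⟫` would yield one of smaller height
  by_contra hα'
  obtain ⟨α, hα, hmin⟩ := (Rpos.filter fun α => sref α ∉ S).exists_min_image (⟪v, ·⟫)
    ⟨α, mem_filter.2 ⟨hα, hα'⟩⟩
  rw [mem_filter] at hα
  have hαΔ : α ∉ Δ := fun hαΔ => hα.2 (Subgroup.subset_closure ⟨α, hαΔ, rfl⟩)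
  obtain ⟨β, hβ, hαβ⟩ := h.exists_simple_inner_pos hα.1
  have hlt : ⟪v, sref β α⟫ < ⟪v, α⟫ := by
    have := real_inner_self_pos.2 (h.nonzero β (h.mem_of_mem_simple_s12 hβ))
    have : 0 < 2 * ⟪α, β⟫ / ⟪β, β⟫ := by positivity
    rw [sref_apply_s12, inner_sub_right, real_inner_smul_right, hv β hβ]
    linarith
  have hγ : sref (sref β α) ∈ S := by
    by_contra hγ
    exact (hmin _ (mem_filter.2
      ⟨h.sref_simple_apply_mem_pos hβ hα.1 (ne_of_mem_of_not_mem hβ hαΔ).symm, hγ⟩)).not_gt hlt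
  have hβ' : sref β ∈ S := Subgroup.subset_closure ⟨β, hβ, rfl⟩
  apply hα.2
  convert mul_mem (mul_mem (inv_mem hβ') hγ) hβ' using 1
  rw [sref_conj]
  group

lemma weylGroup_le_closure_simple (h : IsRootSystem R Rpos Δ) :
    weylGroup R ≤ Subgroup.closure {g | ∃ β ∈ Δ, g = sref β} := by
  refine (Subgroup.closure_le _).2 ?_
  rintro _ ⟨α, hα, rfl⟩
  rcases h.pos_or_neg α hα with hpos | hneg
  · exact h.sref_mem_closure_simple hpos
  · simpa [sref_neg] using h.sref_mem_closure_simple hneg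

lemma exists_srefProd_eq (h : IsRootSystem R Rpos Δ) (hg : g ∈ weylGroup R) :
    ∃ L : List V, (∀ β ∈ L, β ∈ Δ) ∧ srefProd L = g := by
  have hg' := h.weylGroup_le_closure_simple hg
  clear hg
  induction hg' using Subgroup.closure_induction'' with
  | mem _ hx =>
    obtain ⟨β, hβ, rfl⟩ := hx
    exact ⟨[β], by simpa using hβ, by simp⟩
  | inv_mem _ hx =>
    obtain ⟨β, hβ, rfl⟩ := hx
    exact ⟨[β], by simpa using hβ, by simp [sref_inv]⟩
  | one => exact ⟨[], by simp, rfl⟩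
  | mul _ _ _ _ ihx ihy =>
    obtain ⟨L, hL, rfl⟩ := ihx
    obtain ⟨L', hL', rfl⟩ := ihy
    exact ⟨L ++ L', fun β hβ => (List.mem_append.1 hβ).elim (hL β) (hL' β), by simp⟩

lemma exists_srefProd_mul_sref_eq (h : IsRootSystem R Rpos Δ) {L : List V}
    (hL : ∀ β ∈ L, β ∈ Δ) {δ : V} (hδ : δ ∈ Δ) (hneg : srefProd L δ ∉ Rpos) :
    ∃ L' : List V, (∀ β ∈ L', β ∈ Δ) ∧ L'.length + 1 = L.length ∧
      srefProd L * sref δ = srefProd L' := by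
  induction L with
  | nil => exact absurd (h.simple_subset hδ) (by simpa using hneg)
  | cons β T ih =>
    simp only [List.mem_cons, forall_eq_or_imp] at hL
    by_cases hT : srefProd T δ ∈ Rpos
    · -- `sref β` sends the positive root `srefProd T δ` to a negative one, so they coincide
      have hTδ : srefProd T δ = β := by
        by_contra hne
        exact hneg (by simpa using h.sref_simple_apply_mem_pos hL.1 hT hne)
      refine ⟨T, hL.2, rfl, ?_⟩
      rw [srefProd_cons, ← hTδ, sref_conj]
      simp only [mul_assoc, inv_mul_cancel_left, sref_mul_self, mul_one]
    · obtain ⟨T', hT', hlen, heq⟩ := ih hL.2 hT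
      refine ⟨β :: T', ?_, by simp [hlen], by rw [srefProd_cons, mul_assoc, heq, srefProd_cons]⟩
      simpa [hL.1] using hT'

lemma exists_isReducedWord (h : IsRootSystem R Rpos Δ) (hg : g ∈ weylGroup R) :
    ∃ L : List V, (∀ β ∈ L, β ∈ Δ) ∧ IsReducedWord Rpos L ∧ srefProd L = g := by
  have hex : ∃ n, ∃ L : List V, (∀ β ∈ L, β ∈ Δ) ∧ L.length = n ∧ srefProd L = g := by
    obtain ⟨L, hL, hg⟩ := h.exists_srefProd_eq hg
    exact ⟨_, L, hL, rfl, hg⟩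
  obtain ⟨L, hL, hlen, rfl⟩ := Nat.find_spec hex
  -- a word of minimal length is reduced, since the exchange lemma shortens any other word
  refine ⟨L, hL, fun I δ J hIJ => ?_, rfl⟩
  by_contra hneg
  subst hIJ
  obtain ⟨I', hI', hlen', heq⟩ := h.exists_srefProd_mul_sref_eq
    (fun β hβ => hL β (by simp [hβ])) (hL δ (by simp)) hneg
  refine Nat.find_min hex (m := (I' ++ J).length) (by
    rw [← hlen]; simp only [List.length_append, List.length_cons]; omega)
    ⟨I' ++ J, fun β hβ => ?_, rfl, by simp [← heq, mul_assoc]⟩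
  rcases List.mem_append.1 hβ with hβ | hβ
  · exact hI' β hβ
  · exact hL β (by simp [hβ])

lemma eq_one_of_forall_apply_mem_pos (h : IsRootSystem R Rpos Δ) (hg : g ∈ weylGroup R)
    (hpos : ∀ γ ∈ Rpos, g γ ∈ Rpos) : g = 1 := by
  obtain ⟨L, hL, hred, rfl⟩ := h.exists_isReducedWord hg
  rcases L.eq_nil_or_concat with rfl | ⟨I, δ, rfl⟩
  · rfl
  · have := hpos δ (h.simple_subset (hL δ (by simp)))
    simp only [List.concat_eq_append, srefProd_append, srefProd_cons, srefProd_nil, mul_one,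
      LinearIsometryEquiv.coe_mul, Function.comp_apply, sref_apply_self, map_neg] at this
    exact absurd this (h.not_both _ (hred I δ [] (by simp)))

lemma mem_hull_of_mem_pos (h : IsRootSystem R Rpos Δ) (hγ : γ ∈ Rpos) :
    γ ∈ PointedCone.hull ℝ (Δ : Set V) := by
  obtain ⟨c, hc0, rfl⟩ := h.simple_nonneg_comb γ hγ
  exact sum_mem fun β hβ => PointedCone.smul_mem _ (hc0 β hβ) (PointedCone.subset_hull hβ)

lemma sub_apply_mem_hull (h : IsRootSystem R Rpos Δ) (hlam : isDominant Rpos lam)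
    (hg : g ∈ weylGroup R) : lam - g lam ∈ PointedCone.hull ℝ (Δ : Set V) := by
  obtain ⟨L, hL, hred, rfl⟩ := h.exists_isReducedWord hg
  clear hg
  induction L using List.reverseRecOn with
  | nil => simp
  | append_singleton I δ ih =>
    have hδ : δ ∈ Δ := hL δ (by simp)
    have ht : 0 ≤ 2 * ⟪lam, δ⟫ / ⟪δ, δ⟫ :=
      div_nonneg (mul_nonneg zero_le_two (hlam δ (h.simple_subset hδ))) real_inner_self_nonneg
    have : lam - srefProd (I ++ [δ]) lam =
        (lam - srefProd I lam) + (2 * ⟪lam, δ⟫ / ⟪δ, δ⟫) • srefProd I δ := by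
      rw [srefProd_append, srefProd_cons, srefProd_nil, mul_one, LinearIsometryEquiv.coe_mul,
        Function.comp_apply, sref_apply_s12, map_sub, map_smul]
      abel
    rw [this]
    exact add_mem (ih (fun β hβ => hL β (by simp [hβ])) hred.of_append)
      (PointedCone.smul_mem _ ht (h.mem_hull_of_mem_pos (hred I δ [] rfl)))

lemma orderOf_pos (h : IsRootSystem R Rpos Δ) (hg : g ∈ weylGroup R) : 0 < orderOf g := by
  have : Finite (weylGroup R) := by
    refine Finite.of_injective
      (fun x : weylGroup R => fun α : R => (⟨x.1 α, h.weylGroup_apply_mem x.2 α.2⟩ : R))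
      fun x y hxy => ?_
    have hfix : ∀ α ∈ R, (y⁻¹ * x : weylGroup R).1 α = α := fun α hα => by
      have := congrArg Subtype.val (congrFun hxy ⟨α, hα⟩)
      simp_all
    have := h.eq_one_of_forall_apply_mem_pos (y⁻¹ * x).2 fun γ hγ => by
      rwa [hfix γ (h.pos_subset hγ)]
    exact (inv_mul_eq_one.1 (Subtype.ext this)).symm
  exact Subgroup.orderOf_coe ⟨g, hg⟩ ▸ _root_.orderOf_pos _

lemma exists_simple_inner_eq_zero (h : IsRootSystem R Rpos Δ) (hν : isDominant Rpos ν)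
    (hg : g ∈ weylGroup R) (hg1 : g ≠ 1) (hfix : g ν = ν) : ∃ α ∈ Δ, ⟪ν, α⟫ = 0 := by
  by_contra! hne
  have hpos : ∀ γ ∈ Rpos, 0 < ⟪ν, γ⟫ := fun γ hγ => h.inner_pos_of_forall_simple
    (fun β hβ => (hν β (h.simple_subset hβ)).lt_of_ne' (hne β hβ)) hγ
  refine hg1 (h.eq_one_of_forall_apply_mem_pos hg fun γ hγ => ?_)
  refine (h.pos_or_neg _ (h.weylGroup_apply_mem hg (h.pos_subset hγ))).resolve_right fun hneg => ?_
  have := hν _ hneg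
  rw [inner_neg_right, ← hfix, LinearIsometryEquiv.inner_map_map] at this
  linarith [hpos γ hγ]

lemma exists_int_inner_of_mem_corootLattice (h : IsRootSystem R Rpos Δ)
    (hlam : lam ∈ corootLattice R) (hα : α ∈ R) : ∃ n : ℤ, ⟪lam, α⟫ = n := by
  induction hlam using Submodule.span_induction with
  | mem x hx =>
    obtain ⟨γ, hγ, rfl⟩ := hx
    obtain ⟨n, hn⟩ := h.crystallographic γ hγ α hα
    exact ⟨n, by rw [coroot, real_inner_smul_left, ← hn, real_inner_comm α γ]; ring⟩
  | zero => exact ⟨0, by simp⟩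
  | add x y _ _ hx hy =>
    obtain ⟨a, ha⟩ := hx
    obtain ⟨b, hb⟩ := hy
    exact ⟨a + b, by simp [inner_add_left, ha, hb]⟩
  | smul n x _ hx =>
    obtain ⟨a, ha⟩ := hx
    exact ⟨n * a, by rw [← Int.cast_smul_eq_zsmul ℝ, real_inner_smul_left, ha]; push_cast; ring⟩

lemma exists_rat_coeff (h : IsRootSystem R Rpos Δ) {c : V → ℝ}
    (hc : ∀ k ∈ Δ, ∃ q : ℚ, ⟪∑ β ∈ Δ, c β • coroot β, k⟫ = q) : ∀ β ∈ Δ, ∃ q : ℚ, c β = q := by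
  obtain ⟨A, hA⟩ : ∃ A : Matrix Δ Δ ℚ, A.map (↑) = cartanMatrix Δ := by
    choose n hn using fun i j : Δ =>
      h.crystallographic i (h.mem_of_mem_simple_s12 i.2) j (h.mem_of_mem_simple_s12 j.2)
    refine ⟨Matrix.of fun i j => (n i j : ℚ), Matrix.ext fun i j => ?_⟩
    simp only [Matrix.map_apply, Matrix.of_apply, Rat.cast_intCast, ← hn, cartanMatrix, coroot,
      real_inner_smul_left, real_inner_comm (i : V)]
    ring
  choose q hq using fun k : Δ => hc k k.2
  obtain ⟨p, hp⟩ := Matrix.exists_ratCast_eq_of_vecMul A (hA ▸ isUnit_cartanMatrix h.simple_indep)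
    (c := fun i : Δ => c i) (q := q) (funext fun k => by
      rw [hA, ← inner_sum_smul_coroot, Function.comp_apply, ← hq k,
        sum_coe_sort Δ fun β => c β • coroot β])
  exact fun β hβ => ⟨p ⟨β, hβ⟩, congrFun hp ⟨β, hβ⟩⟩

lemma domLE_of_sub_mem_hull (h : IsRootSystem R Rpos Δ)
    (hmem : lam - ν ∈ PointedCone.hull ℝ (Δ : Set V))
    (hrat : ∀ β ∈ Δ, ∃ q : ℚ, ⟪lam - ν, β⟫ = q) : domLE Δ ν lam := by
  obtain ⟨c, hcΔ, hc0, hc⟩ := PointedCone.mem_hull_set.1 hmem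
  have hd : lam - ν = ∑ β ∈ Δ, (c β * ⟪β, β⟫ / 2) • coroot β := by
    rw [← hc, Finsupp.sum_of_support_subset c (coe_subset.1 hcΔ) (fun β r => r • β)
      fun _ _ => zero_smul ℝ _]
    refine sum_congr rfl fun β hβ => ?_
    have := (real_inner_self_pos.2 (h.nonzero β (h.mem_of_mem_simple_s12 hβ))).ne'
    rw [coroot, smul_smul]
    congr 1
    field_simp
  choose! q hq using h.exists_rat_coeff (hd ▸ hrat)
  refine ⟨q, fun β hβ => ?_, hd.trans (sum_congr rfl fun β hβ => by rw [hq β hβ])⟩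
  have : (0 : ℝ) ≤ q β := by
    rw [← hq β hβ]
    exact div_nonneg (mul_nonneg (hc0 β) real_inner_self_nonneg) zero_le_two
  exact_mod_cast this

lemma domLE_inv_card_smul_sum (h : IsRootSystem R Rpos Δ) (hlat : lam ∈ corootLattice R)
    (hdom : isDominant Rpos lam) {ι : Type*} {s : Finset ι} (hs : s.Nonempty)
    {g : ι → V ≃ₗᵢ[ℝ] V} (hg : ∀ i ∈ s, g i ∈ weylGroup R) :
    domLE Δ ((#s : ℝ)⁻¹ • ∑ i ∈ s, g i lam) lam := by
  have hs0 : (#s : ℝ) ≠ 0 := Nat.cast_ne_zero.2 hs.card_pos.ne'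
  refine h.domLE_of_sub_mem_hull ?_ fun β hβ => ?_
  · have : lam - (#s : ℝ)⁻¹ • ∑ i ∈ s, g i lam = (#s : ℝ)⁻¹ • ∑ i ∈ s, (lam - g i lam) := by
      rw [sum_sub_distrib, sum_const, smul_sub, ← Nat.cast_smul_eq_nsmul ℝ, smul_smul,
        inv_mul_cancel₀ hs0, one_smul]
    rw [this]
    exact PointedCone.smul_mem _ (by positivity)
      (sum_mem fun i hi => h.sub_apply_mem_hull hdom (hg i hi))
  · have hβR := h.mem_of_mem_simple_s12 hβ
    have hint : ∀ i ∈ s, ⟪g i lam, β⟫ ∈ (Rat.castHom ℝ).fieldRange := fun i hi => by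
      obtain ⟨n, hn⟩ := h.exists_int_inner_of_mem_corootLattice hlat
        (h.weylGroup_apply_mem (inv_mem (hg i hi)) hβR)
      rw [LinearIsometryEquiv.inner_map_eq_flip]
      exact hn ▸ intCast_mem _ n
    obtain ⟨n, hn⟩ := h.exists_int_inner_of_mem_corootLattice hlat hβR
    obtain ⟨q, hq⟩ : ⟪lam - (#s : ℝ)⁻¹ • ∑ i ∈ s, g i lam, β⟫ ∈ (Rat.castHom ℝ).fieldRange := by
      rw [inner_sub_left, real_inner_smul_left, sum_inner, hn]
      exact sub_mem (intCast_mem _ n) (mul_mem (inv_mem (natCast_mem _ _)) (sum_mem hint))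
    exact ⟨q, hq.symm⟩

lemma domLE_sub_smul_coroot_of_inner_eq_zero (h : IsRootSystem R Rpos Δ) (hle : domLE Δ ν lam)
    (hα : α ∈ Δ) (hνα : ⟪ν, α⟫ = 0) {r : ℚ} (hr : 2 * (r : ℝ) ≤ ⟪lam, α⟫) :
    domLE Δ ν (lam - (r : ℝ) • coroot α) := by
  obtain ⟨q, hq0, hq⟩ := hle
  -- `⟪β^∨, α⟫ ≤ 0` for `β ≠ α`, so pairing `lam - ν` with `α` bounds the coefficient of `α^∨`
  have hbound : ⟪lam, α⟫ ≤ 2 * q α := by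
    have hpair : ⟪lam, α⟫ = ∑ β ∈ Δ, (q β : ℝ) * ⟪coroot β, α⟫ := by
      rw [← sub_zero ⟪lam, α⟫, ← hνα, ← inner_sub_left, hq, sum_inner]
      simp_rw [real_inner_smul_left]
    have hαα := (real_inner_self_pos.2 (h.nonzero α (h.mem_of_mem_simple_s12 hα))).ne'
    have hrest : ∑ β ∈ Δ.erase α, (q β : ℝ) * ⟪coroot β, α⟫ ≤ 0 := sum_nonpos fun β hβ => by
      have hβΔ := mem_of_mem_erase hβ
      refine mul_nonpos_of_nonneg_of_nonpos (Rat.cast_nonneg.2 (hq0 β hβΔ)) ?_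
      rw [coroot, real_inner_smul_left]
      exact mul_nonpos_of_nonneg_of_nonpos (div_nonneg zero_le_two real_inner_self_nonneg)
        (h.inner_simple_nonpos_s12 hα hβΔ (ne_of_mem_erase hβ))
    rw [hpair, ← add_sum_erase _ _ hα, coroot, real_inner_smul_left, div_mul_cancel₀ _ hαα]
    linarith
  refine ⟨fun β => q β - if β = α then r else 0, fun β hβ => ?_, ?_⟩
  · dsimp only
    split_ifs with hβα
    · subst hβα
      have : (r : ℝ) ≤ q β := by linarith
      exact sub_nonneg.2 (by exact_mod_cast this)
    · simpa using hq0 β hβ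
  · simp only [Rat.cast_sub, apply_ite (Rat.cast : ℚ → ℝ), Rat.cast_zero, sub_smul, ite_smul,
      zero_smul, sum_sub_distrib, ← hq, sum_ite_eq', hα, if_true]
    abel

end IsRootSystem

end

theorem stmt_12 (R Rpos Δ : Finset V) (h : IsRootSystem R Rpos Δ)
    (lam : V) (hlat : lam ∈ corootLattice R) (hdom : isDominant Rpos lam)
    (w : V ≃ₗᵢ[ℝ] V) (hw : w ∈ weylGroup R) (hw1 : w ≠ 1)
    (m : ℕ) (hm : orderOf w = m)
    (ν : V) (hνdom : isDominant Rpos ν)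
    (u : V ≃ₗᵢ[ℝ] V) (hu : u ∈ weylGroup R)
    (hν : ν = u ((m : ℝ)⁻¹ • ∑ i ∈ Finset.range m, (w ^ (i + 1)) lam)) :
    ∃ αi ∈ Δ,
      domLE Δ (lam - (⟪lam, αi⟫ / 2) • coroot αi) lam ∧
      domLE Δ ν (lam - (⟪lam, αi⟫ / 2) • coroot αi) := by
  subst hm
  have hle : domLE Δ ν lam := by
    have := h.domLE_inv_card_smul_sum hlat hdom (nonempty_range_iff.2 (h.orderOf_pos hw).ne')
      (g := fun k => u * w ^ (k + 1)) fun k _ => mul_mem hu (pow_mem hw _)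
    rw [card_range] at this
    rwa [hν, map_smul, map_sum]
  have hfix : (u * w * u⁻¹) ν = ν := by
    simp only [hν, LinearIsometryEquiv.coe_mul, LinearIsometryEquiv.coe_inv, Function.comp_apply,
      LinearIsometryEquiv.symm_apply_apply, map_smul, apply_sum_range_orderOf]
  obtain ⟨α, hα, hνα⟩ := h.exists_simple_inner_eq_zero hνdom
    (mul_mem (mul_mem hu hw) (inv_mem hu)) (by simpa using hw1) hfix
  obtain ⟨n, hn⟩ := h.exists_int_inner_of_mem_corootLattice hlat (h.mem_of_mem_simple_s12 hα)
  have hhalf : ⟪lam, α⟫ / 2 = ((n / 2 : ℚ) : ℝ) := by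
    rw [hn]
    push_cast
    ring
  refine ⟨α, hα, ?_, ?_⟩ <;> rw [hhalf]
  · refine domLE_sub_smul_coroot hα ((Rat.cast_nonneg (K := ℝ)).1 ?_)
    linarith [hdom α (h.simple_subset hα)]
  · exact h.domLE_sub_smul_coroot_of_inner_eq_zero hle hα hνα (by linarith)
end
end
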